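/- Let Z ⊂ P^4 be the disjoint union of two sets A and B of 13 points each, with Z satisfying CB(5), Dh_Z(0) = 1, Dh_Z(1) = 4, Dh_Z(2) ≥ 8. Then Dh_Z(2) = 8 (so h_Z(2) = 13) and h_Z(3) ≤ 21. -/

import Mathlib

open MvPolynomial

noncomputable section

/-- Projective n-space over ℂ. -/
abbrev Pn (n : ℕ) := Projectivization ℂ (Fin (n + 1) → ℂ)

/-- Evaluation of a polynomial at a vector, as a linear map. -/
noncomputable def evalAt {n : ℕ} (v : Fin (n + 1) → ℂ) :
    MvPolynomial (Fin (n + 1)) ℂ →ₗ[ℂ] ℂ :=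
  (MvPolynomial.aeval v).toLinearMap

/-- The degree-`j` homogeneous piece of the polynomial ring `R = ℂ[x_0,…,x_n]`. -/
abbrev Rdeg (n j : ℕ) : Submodule ℂ (MvPolynomial (Fin (n + 1)) ℂ) :=
  MvPolynomial.homogeneousSubmodule (Fin (n + 1)) ℂ j

/-- Evaluation of degree-`j` forms at the points of a finite set `Z ⊂ ℙⁿ`
(using chosen representatives; its rank does not depend on the choice). -/
noncomputable def evalMap {n : ℕ} (Z : Finset (Pn n)) (j : ℕ) :
    (Rdeg n j) →ₗ[ℂ] (Z → ℂ) :=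
  (LinearMap.pi fun z : Z => evalAt (z : Pn n).rep).comp (Rdeg n j).subtype

/-- Hilbert function of a finite set of points `Z ⊂ ℙⁿ`. -/
noncomputable def hilb {n : ℕ} (Z : Finset (Pn n)) (j : ℕ) : ℕ :=
  Module.finrank ℂ (LinearMap.range (evalMap Z j))

/-- First difference of the Hilbert function (the `h`-vector entries). -/
noncomputable def Dh {n : ℕ} (Z : Finset (Pn n)) : ℕ → ℕ
  | 0 => hilb Z 0
  | (j + 1) => hilb Z (j + 1) - hilb Z j

/-- The Cayley–Bacharach property `CB(i)`: every degree-`i` form vanishing on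
`Z ∖ {P}` also vanishes at `P`, for every `P ∈ Z`. -/
def CB {n : ℕ} (Z : Finset (Pn n)) (i : ℕ) : Prop :=
  ∀ P ∈ Z, ∀ f ∈ Rdeg n i,
    (∀ Q ∈ Z, Q ≠ P → evalAt (Q : Pn n).rep f = 0) → evalAt P.rep f = 0

/-- The `d`-th power of the linear form corresponding to a point `P ∈ ℙⁿ`,
i.e. the image of `P` under the degree-`d` Veronese map (rep-scaled). -/
noncomputable def powForm (n d : ℕ) (P : Pn n) : MvPolynomial (Fin (n + 1)) ℂ :=
  (∑ i, P.rep i • MvPolynomial.X i) ^ d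

/-- `A` computes (is a decomposition of) the degree-`d` form `T`:
`T` lies in the span of the `d`-th powers of the linear forms given by `A`. -/
def computes (n d : ℕ) (A : Finset (Pn n)) (T : MvPolynomial (Fin (n + 1)) ℂ) : Prop :=
  T ∈ Submodule.span ℂ (powForm n d '' (A : Set (Pn n)))

/-- `A` is a non-redundant decomposition of `T`. -/
def nonRedundant (n d : ℕ) (A : Finset (Pn n)) (T : MvPolynomial (Fin (n + 1)) ℂ) : Prop :=
  computes n d A T ∧ ∀ A' : Finset (Pn n), A' ⊂ A → ¬ computes n d A' T

/-- The `d`-th Kruskal rank of `A` is `≥ k`: all subsets of `v_d(A)` of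
cardinality at most `k` are linearly independent. -/
def kruskalGe (n d : ℕ) (A : Finset (Pn n)) (k : ℕ) : Prop :=
  ∀ S : Finset (Pn n), S ⊆ A → S.card ≤ k →
    LinearIndependent ℂ (fun P : S => powForm n d P.1)

/-- Quadrics through `A`. -/
def quadricsThrough (n : ℕ) (A : Finset (Pn n)) : Set (MvPolynomial (Fin (n + 1)) ℂ) :=
  {f | f ∈ Rdeg n 2 ∧ ∀ P ∈ A, evalAt P.rep f = 0}

/-- Base locus of the linear system of quadric hypersurfaces through `A`. -/
def baseLocusQ (n : ℕ) (A : Finset (Pn n)) : Set (Pn n) :=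
  {Q | ∀ f ∈ quadricsThrough n A, evalAt Q.rep f = 0}

/-- Waring rank of a form `T`. -/
noncomputable def waringRank (n d : ℕ) (T : MvPolynomial (Fin (n + 1)) ℂ) : ℕ :=
  sInf {r | ∃ B : Finset (Pn n), B.card = r ∧ computes n d B T}

/-- Degree-`d` graded piece of the homogeneous ideal of `Z`. -/
noncomputable def idealDeg (n : ℕ) (Z : Finset (Pn n)) (d : ℕ) :
    Submodule ℂ (MvPolynomial (Fin (n + 1)) ℂ) :=
  Rdeg n d ⊓ ⨅ P ∈ Z, LinearMap.ker (evalAt (P : Pn n).rep)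

end

open scoped Classical

/-!
A general linear form `ℓ` vanishes at no point of `Z`, so multiplication by `ℓ` embeds the
degree-`j` evaluation image into the degree-`(j+1)` one: `h_Z` is nondecreasing.

If `Z` satisfies `CB(i+j)` then `h_Z(i) + h_Z(j) ≤ |Z|`. Otherwise the evaluation images
`U, W ⊆ ℂ^Z` have `dim U + dim W > |Z|`. Take a set `S` of `dim U` coordinates on which elements
of `U` are determined; some `w ∈ W ∖ 0` vanishes off `S`, say `w(P) ≠ 0`, and some `u ∈ U ∖ 0`
vanishes on `S ∖ {P}`, hence `u(P) ≠ 0`. The product of the corresponding forms, of degree `i+j`,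
vanishes on `Z ∖ {P}` but not at `P`.

With `|Z| = 26`, `h_Z(1) = 5` and `h_Z(2) ≥ 13`, the case `i = 2, j = 3` together with
`h_Z(2) ≤ h_Z(3)` forces `h_Z(2) = h_Z(3) = 13`.
-/

open Module

section

variable {K ι : Type*} [Field K] [Fintype ι]

theorem Submodule.exists_finset_card_le_finrank_forall_vanishing_eq_zero
    (V : Submodule K (ι → K)) :
    ∃ S : Finset ι, S.card ≤ finrank K V ∧ ∀ v ∈ V, (∀ i ∈ S, v i = 0) → v = 0 := by
  let coord : ι → Dual K V := fun i => (LinearMap.proj i).comp V.subtype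
  obtain ⟨κ, a, ha, hspan, hli⟩ := exists_linearIndependent' K coord
  have : Fintype κ := Fintype.ofInjective a ha
  refine ⟨Finset.univ.map ⟨a, ha⟩, ?_, fun v hv hvS => ?_⟩
  · simpa [Subspace.dual_finrank_eq] using hli.fintype_card_le_finrank
  · have hspan_le : Submodule.span K (Set.range (coord ∘ a)) ≤
        LinearMap.ker (Dual.eval K V ⟨v, hv⟩) :=
      Submodule.span_le.mpr <| by
        rintro _ ⟨k, rfl⟩
        exact hvS (a k) (by simp)
    funext i
    have hi : coord i ∈ Submodule.span K (Set.range (coord ∘ a)) :=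
      hspan ▸ Submodule.subset_span ⟨i, rfl⟩
    exact hspan_le hi

theorem Submodule.exists_ne_zero_vanishing_of_card_lt_finrank
    (V : Submodule K (ι → K)) (T : Finset ι) (hT : T.card < finrank K V) :
    ∃ v ∈ V, v ≠ 0 ∧ ∀ i ∈ T, v i = 0 := by
  let restrict : V →ₗ[K] (T → K) := (LinearMap.funLeft K K ((↑) : T → ι)).comp V.subtype
  obtain ⟨v, hv, hv0⟩ := Submodule.exists_mem_ne_zero_of_ne_bot
    (LinearMap.ker_ne_bot_of_finrank_lt (f := restrict) (by simpa using hT))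
  exact ⟨v, v.2, by simpa using hv0, fun i hi => congrFun hv ⟨i, hi⟩⟩

theorem exists_mul_ne_zero_at_exactly_one_of_card_lt_finrank_add_finrank
    (U W : Submodule K (ι → K)) (h : Fintype.card ι < finrank K U + finrank K W) :
    ∃ P : ι, ∃ u ∈ U, ∃ w ∈ W, u P * w P ≠ 0 ∧ ∀ Q ≠ P, u Q * w Q = 0 := by
  obtain ⟨S, hSU, hS⟩ := U.exists_finset_card_le_finrank_forall_vanishing_eq_zero
  have hUS : finrank K U ≤ S.card := by
    by_contra! hlt
    obtain ⟨u, hu, hu0, huS⟩ := U.exists_ne_zero_vanishing_of_card_lt_finrank S hlt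
    exact hu0 (hS u hu huS)
  obtain ⟨w, hw, hw0, hwS⟩ := W.exists_ne_zero_vanishing_of_card_lt_finrank Sᶜ
    (by rw [Finset.card_compl]; have := S.card_le_univ; omega)
  obtain ⟨P, hwP⟩ := Function.ne_iff.mp hw0
  have hPS : P ∈ S := by_contra fun hP => hwP (hwS P (Finset.mem_compl.mpr hP))
  obtain ⟨u, hu, hu0, huS⟩ := U.exists_ne_zero_vanishing_of_card_lt_finrank (S.erase P)
    (by rw [Finset.card_erase_of_mem hPS]; have := S.card_pos.mpr ⟨P, hPS⟩; omega)
  have huP : u P ≠ 0 := fun huP => hu0 <| hS u hu fun Q hQ => by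
    by_cases hQP : Q = P
    · exact hQP ▸ huP
    · exact huS Q (Finset.mem_erase.mpr ⟨hQP, hQ⟩)
  refine ⟨P, u, hu, w, hw, mul_ne_zero huP hwP, fun Q hQP => ?_⟩
  by_cases hQ : Q ∈ S
  · rw [huS Q (Finset.mem_erase.mpr ⟨hQP, hQ⟩), zero_mul]
  · rw [hwS Q (Finset.mem_compl.mpr hQ), mul_zero]

end

theorem exists_linear_form_eval_ne_zero {n : ℕ} (Z : Finset (Pn n)) :
    ∃ ℓ ∈ Rdeg n 1, ∀ P ∈ Z, evalAt P.rep ℓ ≠ 0 := by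
  let L := Fintype.linearCombination ℂ (X : Fin (n + 1) → MvPolynomial (Fin (n + 1)) ℂ)
  have hL : ∀ c, L c ∈ Rdeg n 1 := fun c => by
    rw [Fintype.linearCombination_apply]
    exact Submodule.sum_mem _ fun i _ => Submodule.smul_mem _ _ (isHomogeneous_X ℂ i)
  let H : Z → Subspace ℂ (Fin (n + 1) → ℂ) := fun P => LinearMap.ker ((evalAt P.1.rep).comp L)
  have hH : ∀ P, H P ≠ ⊤ := fun P hP => by
    obtain ⟨i, hi⟩ := Function.ne_iff.mp P.1.rep_nonzero
    have := LinearMap.mem_ker.mp (hP ▸ Submodule.mem_top : Pi.single i 1 ∈ H P)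
    exact hi (by simpa [L, evalAt] using this)
  obtain ⟨c, hc⟩ : ∃ c, ∀ P, c ∉ H P := by
    by_contra! hcover
    obtain ⟨P, hP⟩ := Subspace.exists_eq_top_of_iUnion_eq_univ
      (Set.eq_univ_of_forall fun c => Set.mem_iUnion.mpr (hcover c))
    exact hH P hP
  exact ⟨L c, hL c, fun P hP => hc ⟨P, hP⟩⟩

theorem evalAt_mul {n : ℕ} (v : Fin (n + 1) → ℂ) (f g : MvPolynomial (Fin (n + 1)) ℂ) :
    evalAt v (f * g) = evalAt v f * evalAt v g :=
  map_mul (aeval v) f g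

theorem mul_mem_Rdeg {n i j : ℕ} {f g : MvPolynomial (Fin (n + 1)) ℂ} (hf : f ∈ Rdeg n i)
    (hg : g ∈ Rdeg n j) : f * g ∈ Rdeg n (i + j) :=
  IsHomogeneous.mul hf hg

theorem hilb_le_hilb_succ {n : ℕ} (Z : Finset (Pn n)) (j : ℕ) : hilb Z j ≤ hilb Z (j + 1) := by
  obtain ⟨ℓ, hℓ, hℓZ⟩ := exists_linear_form_eval_ne_zero Z
  let mulℓ : (Z → ℂ) ≃ₗ[ℂ] (Z → ℂ) := LinearEquiv.piCongrRight fun P =>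
    LinearEquiv.smulOfNeZero ℂ ℂ _ (hℓZ P.1 P.2)
  have hmap : (LinearMap.range (evalMap Z j)).map mulℓ.toLinearMap ≤
      LinearMap.range (evalMap Z (j + 1)) := by
    rintro _ ⟨_, ⟨f, rfl⟩, rfl⟩
    refine ⟨⟨ℓ * f, add_comm j 1 ▸ mul_mem_Rdeg hℓ f.2⟩, funext fun P => ?_⟩
    simp [evalMap, mulℓ, evalAt_mul]
  unfold hilb
  rw [← LinearEquiv.finrank_map_eq mulℓ]
  exact Submodule.finrank_mono hmap

theorem hilb_add_hilb_le_card_of_CB {n : ℕ} (Z : Finset (Pn n)) (i j : ℕ) (hCB : CB Z (i + j)) :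
    hilb Z i + hilb Z j ≤ Z.card := by
  by_contra! hlt
  obtain ⟨P, _, ⟨f, rfl⟩, _, ⟨g, rfl⟩, hP, hQ⟩ :=
    exists_mul_ne_zero_at_exactly_one_of_card_lt_finrank_add_finrank
      (LinearMap.range (evalMap Z i)) (LinearMap.range (evalMap Z j))
      (by simpa [hilb] using hlt)
  have hvanish : ∀ Q ∈ Z, Q ≠ P → evalAt Q.rep (f.1 * g.1) = 0 := fun Q hQZ hQP => by
    simpa [evalMap, evalAt_mul] using hQ ⟨Q, hQZ⟩ (Subtype.coe_ne_coe.mp hQP)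
  exact hP (by simpa [evalMap, evalAt_mul] using hCB P P.2 _ (mul_mem_Rdeg f.2 g.2) hvanish)

/-- For `Z ⊂ ℙ⁴` the disjoint union of two `13`-point sets,
satisfying `CB(5)` with `Dh_Z(0)=1`, `Dh_Z(1)=4`, `Dh_Z(2) ≥ 8`: then `Dh_Z(2)=8`
(so `h_Z(2)=13`) and `h_Z(3) ≤ 21`. -/
theorem stmt13 (A B : Finset (Pn 4)) (hd : Disjoint A B) (hA : A.card = 13)
    (hB : B.card = 13) (hCB : CB (A ∪ B) 5) (h0 : Dh (A ∪ B) 0 = 1)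
    (h1 : Dh (A ∪ B) 1 = 4) (h2 : 8 ≤ Dh (A ∪ B) 2) :
    Dh (A ∪ B) 2 = 8 ∧ hilb (A ∪ B) 2 = 13 ∧ hilb (A ∪ B) 3 ≤ 21 := by
  have hcard : (A ∪ B).card = 26 := by rw [Finset.card_union_of_disjoint hd, hA, hB]
  have hsum := hilb_add_hilb_le_card_of_CB (A ∪ B) 2 3 hCB
  have hmono : hilb (A ∪ B) 2 ≤ hilb (A ∪ B) 3 := hilb_le_hilb_succ _ 2
  simp only [Dh, Nat.reduceAdd] at h0 h1 h2 ⊢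
  omega
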